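/- In every MCR game all of whose vertices have finite value, Min has a finite-memory optimal strategy: there exists a finite-memory strategy τ* for Min such that Val(v, τ*) = Val(v) for every vertex v. -/

import Mathlib

open Filter

/-- A two-player turn-based weighted game graph. `owner v = true` means that
vertex `v` belongs to player Max, `owner v = false` that it belongs to player Min.
Every vertex has at least one successor. -/
structure Game (V : Type) where
  owner : V → Bool
  E : V → V → Prop
  nonempty : ∀ v, ∃ v', E v v'
  w : V → V → ℤ

namespace Game

variable {V : Type}

/-- The (reversed) history of the first `k` vertices of `π` (most recent first). -/
def hist (π : ℕ → V) (k : ℕ) : List V := (List.ofFn fun i : Fin k => π i).reverse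

/-- A strategy: given the (reversed) list of previously visited vertices and the current
vertex, it picks a successor of the current vertex. -/
structure Strategy (g : Game V) where
  next : List V → V → V
  valid : ∀ h v, g.E v (next h v)

/-- A memoryless strategy only depends on the current vertex. -/
def Strategy.Memoryless {g : Game V} (s : g.Strategy) : Prop :=
  ∀ h h' v, s.next h v = s.next h' v

/-- A finite-memory strategy is one encoded by a deterministic Moore machine
`⟨M, m0, up, dec⟩`: the choice after a finite play is `dec` applied to the memory state
reached by reading the play (the initial vertex is not read) and to the last vertex. -/
def Strategy.FiniteMemory {g : Game V} (s : g.Strategy) : Prop :=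
  ∃ (M : Type) (_ : Fintype M) (m0 : M) (up : M → V → M) (dec : M → V → V),
    ∀ h v, s.next h v = dec (List.foldl up m0 (((h.reverse ++ [v]).drop 1))) v

variable (g : Game V)

/-- Next vertex chosen by the owner of the current vertex. -/
def step (σ τ : g.Strategy) (h : List V) (v : V) : V :=
  if g.owner v then σ.next h v else τ.next h v

/-- Current vertex and reversed history after `k` steps of the play `Play(v, σ, τ)`. -/
def playAux (σ τ : g.Strategy) (v : V) : ℕ → V × List V
  | 0 => (v, [])
  | k+1 =>
      let p := playAux σ τ v k
      (g.step σ τ p.2 p.1, p.1 :: p.2)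

/-- `Play(v, σ, τ)`: the unique play starting in `v` and conforming to the
strategy `σ` of Max and the strategy `τ` of Min. -/
def play (σ τ : g.Strategy) (v : V) (k : ℕ) : V := (g.playAux σ τ v k).1

/-- An infinite sequence of vertices is a play when consecutive vertices are linked
by edges. -/
def IsPlay (π : ℕ → V) : Prop := ∀ k, g.E (π k) (π (k+1))

/-- A play conforms to a strategy `s` of the player `p` if, whenever the current vertex
belongs to `p`, the next vertex is the one prescribed by `s`. -/
def Conforms (p : Bool) (s : g.Strategy) (π : ℕ → V) : Prop :=
  ∀ k, g.owner (π k) = p → π (k+1) = s.next (hist π k) (π k)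

/-- Total-payoff of the prefix of length `k`: the sum of the first `k` edge weights. -/
def TPfin (π : ℕ → V) (k : ℕ) : ℤ := ∑ i ∈ Finset.range k, g.w (π i) (π (i+1))

/-- Total payoff of an infinite play: `liminf` of the payoffs of its prefixes. -/
noncomputable def TP (π : ℕ → V) : EReal :=
  liminf (fun k => (((g.TPfin π k : ℤ) : ℝ) : EReal)) atTop

/-- Mean payoff of an infinite play. -/
noncomputable def MP (π : ℕ → V) : EReal :=
  liminf (fun k => ((((g.TPfin π k : ℤ) : ℝ) / (k : ℝ)) : EReal)) atTop

open Classical in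
/-- Min-cost reachability payoff with target `t`: total payoff up to the first visit
of `t`, and `+∞` if `t` is never visited. -/
noncomputable def MCR (t : V) (π : ℕ → V) : EReal :=
  if h : ∃ k, π k = t then (((g.TPfin π (Nat.find h) : ℤ) : ℝ) : EReal) else ⊤

open Classical in
/-- `MCR` payoff restricted to reaching the target among the first `i+1` vertices. -/
noncomputable def MCRbd (t : V) (i : ℕ) (π : ℕ → V) : EReal :=
  if ∃ k ≤ i, π k = t then g.MCR t π else ⊤

/-- Value of a strategy `σ` of Max from `v` : `inf_τ P(Play(v, σ, τ))`. -/
noncomputable def valMax (P : (ℕ → V) → EReal) (v : V) (σ : g.Strategy) : EReal :=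
  ⨅ τ : g.Strategy, P (g.play σ τ v)

/-- Value of a strategy `τ` of Min from `v` : `sup_σ P(Play(v, σ, τ))`. -/
noncomputable def valMin (P : (ℕ → V) → EReal) (v : V) (τ : g.Strategy) : EReal :=
  ⨆ σ : g.Strategy, P (g.play σ τ v)

/-- Lower value `Val⁻(v) = sup_σ inf_τ P(Play(v, σ, τ))`. -/
noncomputable def lowerVal (P : (ℕ → V) → EReal) (v : V) : EReal :=
  ⨆ σ : g.Strategy, g.valMax P v σ

/-- Upper value `Val⁺(v) = inf_τ sup_σ P(Play(v, σ, τ))`. -/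
noncomputable def upperVal (P : (ℕ → V) → EReal) (v : V) : EReal :=
  ⨅ τ : g.Strategy, g.valMin P v τ

end Game

/-- A min-cost reachability game: a game together with a target vertex `t` whose only
outgoing edge is a self-loop of weight `0`. -/
structure MCRGame (V : Type) extends Game V where
  t : V
  loop : E t t
  loopOnly : ∀ v, E t v → v = t
  loopZero : w t t = 0

/-- The value of a (determined) MCR game. -/
noncomputable def MCRGame.Val {V : Type} (G : MCRGame V) : V → EReal :=
  fun v => G.toGame.lowerVal (G.toGame.MCR G.t) v

/-- The `i`-step value `val_i(v) = inf_τ sup_σ MCR_i(Play(v, σ, τ))`. -/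
noncomputable def MCRGame.ival {V : Type} (G : MCRGame V) (i : ℕ) : V → EReal :=
  fun v => G.toGame.upperVal (G.toGame.MCRbd G.t i) v

/-!
Value iteration, the iterates of the Bellman operator starting from `0` on the target and `⊤`
elsewhere, is antitone, integer valued and bounded below by `Val`. When all values are finite it
therefore becomes stationary at some horizon `K`. Against the memoryless strategy of Max that
picks a maximising successor for this fixed point, every play reaching the target costs at least
`valIter K`, so `valIter K ≤ Val`. Conversely, if Min plays, after `n` moves, a successor
minimising the `(K - n - 1)`-step value, every play reaches the target within `K` moves at cost
at most `valIter K`; this strategy only needs a counter up to `K` as memory.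
-/

namespace WithTop

noncomputable def toEReal : WithTop ℤ → EReal
  | ⊤ => ⊤
  | (n : ℤ) => ((n : ℝ) : EReal)

@[simp] theorem toEReal_top : (⊤ : WithTop ℤ).toEReal = ⊤ := rfl

@[simp] theorem toEReal_coe (n : ℤ) : (n : WithTop ℤ).toEReal = ((n : ℝ) : EReal) := rfl

@[simp] theorem toEReal_zero : (0 : WithTop ℤ).toEReal = 0 := by
  simp [← WithTop.coe_zero]

theorem toEReal_le_toEReal {a b : WithTop ℤ} : a.toEReal ≤ b.toEReal ↔ a ≤ b := by
  induction a <;> induction b <;> simp [EReal.coe_ne_top]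

theorem toEReal_coe_add (n : ℤ) (x : WithTop ℤ) :
    ((n : WithTop ℤ) + x).toEReal = ((n : ℝ) : EReal) + x.toEReal := by
  induction x with
  | top => simp
  | coe m => simp [← WithTop.coe_add, ← EReal.coe_add]

theorem exists_forall_ge_eq_of_antitone {u : ℕ → WithTop ℤ} (hu : Antitone u) (m : ℤ)
    (hm : ∀ i, (m : WithTop ℤ) ≤ u i) : ∃ N, ∀ i, N ≤ i → u i = u N := by
  by_cases htop : ∀ i, u i = ⊤
  · exact ⟨0, fun i _ => by rw [htop i, htop 0]⟩
  push Not at htop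
  obtain ⟨i₀, hi₀⟩ := htop
  obtain ⟨a, ha⟩ := WithTop.ne_top_iff_exists.mp hi₀
  obtain ⟨n₀, ⟨N, hN⟩, hleast⟩ := Int.exists_least_of_bdd (P := fun n => ∃ i, u i = n)
    ⟨m, fun n ⟨i, hi⟩ => WithTop.coe_le_coe.mp (hi ▸ hm i)⟩ ⟨a, i₀, ha.symm⟩
  refine ⟨N, fun i hi => ?_⟩
  obtain ⟨k, hk⟩ :=
    WithTop.ne_top_iff_exists.mp (ne_top_of_le_ne_top (hN ▸ coe_ne_top) (hu hi))
  refine le_antisymm (hu hi) ?_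
  rw [hN, ← hk]
  exact WithTop.coe_le_coe.mpr (hleast k ⟨i, hk.symm⟩)

end WithTop

namespace Game

variable {V : Type} {g : Game V}

theorem Strategy.ext {s s' : g.Strategy} (h : s.next = s'.next) : s = s' := by
  cases s; cases s'; cases h; rfl

/-- The strategy `s` once the initial vertex `u` lies in the past. -/
def Strategy.after (s : g.Strategy) (u : V) : g.Strategy :=
  ⟨fun h x => s.next (h ++ [u]) x, fun _ _ => s.valid _ _⟩

/-- Play the first move of `s₀`, then follow `s` as if the play had started one step later. -/
def Strategy.cons (s₀ s : g.Strategy) : g.Strategy :=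
  ⟨fun h x => if h = [] then s₀.next [] x else s.next h.dropLast x, by
    intro h x
    split
    · exact s₀.valid _ _
    · exact s.valid _ _⟩

@[simp] theorem Strategy.cons_after (s₀ s : g.Strategy) (u : V) : (s₀.cons s).after u = s :=
  Strategy.ext <| funext fun h => funext fun x => by simp [Strategy.after, Strategy.cons]

theorem step_cons (σ τ₀ τ : g.Strategy) (v : V) :
    g.step σ (τ₀.cons τ) [] v = g.step σ τ₀ [] v := by
  simp [step, Strategy.cons]

theorem exists_strategy_next_nil_eq (s : g.Strategy) {v v' : V} (h : g.E v v') :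
    ∃ τ : g.Strategy, τ.next [] v = v' := by
  classical
  refine ⟨⟨fun l x => if x = v then v' else s.next l x, fun l x => ?_⟩, by simp⟩
  split
  · subst x; exact h
  · exact s.valid _ _

theorem step_edge (σ τ : g.Strategy) (h : List V) (v : V) : g.E v (g.step σ τ h v) := by
  unfold step
  split
  · exact σ.valid _ _
  · exact τ.valid _ _

theorem playAux_succ (σ τ : g.Strategy) (v : V) (k : ℕ) :
    g.playAux σ τ v (k + 1) =
      ((g.playAux (σ.after v) (τ.after v) (g.step σ τ [] v) k).1,
       (g.playAux (σ.after v) (τ.after v) (g.step σ τ [] v) k).2 ++ [v]) := by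
  induction k with
  | zero => rfl
  | succ k ih =>
    change (g.step σ τ (g.playAux σ τ v (k + 1)).2 (g.playAux σ τ v (k + 1)).1, _) = _
    rw [ih]
    rfl

theorem play_succ (σ τ : g.Strategy) (v : V) (k : ℕ) :
    g.play σ τ v (k + 1) = g.play (σ.after v) (τ.after v) (g.step σ τ [] v) k := by
  rw [play, playAux_succ, play]

theorem TPfin_succ (π : ℕ → V) (n : ℕ) :
    g.TPfin π (n + 1) = g.w (π 0) (π 1) + g.TPfin (fun k => π (k + 1)) n := by
  simp only [TPfin, Finset.sum_range_succ']
  ring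

open Classical in
theorem MCR_eq_add_MCR_tail {t : V} {π : ℕ → V} (h0 : π 0 ≠ t) :
    g.MCR t π = ((g.w (π 0) (π 1) : ℝ) : EReal) + g.MCR t (fun k => π (k + 1)) := by
  by_cases h : ∃ k, π (k + 1) = t
  · have h' : ∃ k, π k = t := ⟨_, h.choose_spec⟩
    rw [MCR, MCR, dif_pos h', dif_pos h, Nat.find_comp_succ h' h h0, TPfin_succ]
    push_cast
    rfl
  · have h' : ¬ ∃ k, π k = t := by
      rintro ⟨_ | k, hk⟩
      exacts [h0 hk, h ⟨k, hk⟩]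
    rw [MCR, MCR, dif_neg h', dif_neg h, EReal.coe_add_top]

open Classical in
theorem MCR_play_self (t : V) (σ τ : g.Strategy) : g.MCR t (g.play σ τ t) = 0 := by
  have hex : ∃ k, g.play σ τ t k = t := ⟨0, rfl⟩
  rw [MCR, dif_pos hex, (Nat.find_eq_zero hex).mpr rfl]
  simp [TPfin]

theorem MCR_play_of_ne {t v : V} (hv : v ≠ t) (σ τ : g.Strategy) :
    g.MCR t (g.play σ τ v) = ((g.w v (g.step σ τ [] v) : ℝ) : EReal) +
      g.MCR t (g.play (σ.after v) (τ.after v) (g.step σ τ [] v)) := by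
  rw [MCR_eq_add_MCR_tail hv]
  simp only [play_succ]
  rfl

/-- Min may commit to the first move of any strategy `τ₀`. -/
theorem valMax_le_add_valMax_after {t v : V} (hv : v ≠ t) (σ τ₀ : g.Strategy) :
    g.valMax (g.MCR t) v σ ≤ ((g.w v (g.step σ τ₀ [] v) : ℝ) : EReal) +
      g.valMax (g.MCR t) (g.step σ τ₀ [] v) (σ.after v) := by
  rw [add_comm,
    ← EReal.sub_le_iff_le_add (.inl (EReal.coe_ne_bot _)) (.inl (EReal.coe_ne_top _))]
  refine le_iInf fun τ => EReal.sub_le_of_le_add' ?_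
  refine (iInf_le _ (τ₀.cons τ)).trans_eq ?_
  rw [MCR_play_of_ne hv, step_cons, Strategy.cons_after]

theorem lowerVal_le_valMin (P : (ℕ → V) → EReal) (v : V) (τ : g.Strategy) :
    g.lowerVal P v ≤ g.valMin P v τ :=
  iSup_le fun σ => (iInf_le _ τ).trans (le_iSup (fun σ => P (g.play σ τ v)) σ)

end Game

namespace MCRGame

open Game

variable {V : Type} (G : MCRGame V)

theorem Val_target_le_zero : G.Val G.t ≤ 0 :=
  iSup_le fun σ => (iInf_le _ σ).trans_eq (MCR_play_self _ _ _)

theorem valMax_le_add_Val_of_owner {v : V} (hv : v ≠ G.t) (ho : G.owner v = true)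
    (σ : G.toGame.Strategy) :
    G.toGame.valMax (G.toGame.MCR G.t) v σ ≤
      ((G.w v (σ.next [] v) : ℝ) : EReal) + G.Val (σ.next [] v) := by
  have h := valMax_le_add_valMax_after hv σ σ
  simp only [step, ho, if_true] at h
  exact h.trans (add_le_add_right (le_iSup (G.toGame.valMax _ (σ.next [] v)) _) _)

theorem Val_le_add_Val_of_edge {v v' : V} (hv : v ≠ G.t) (ho : G.owner v = false)
    (he : G.E v v') : G.Val v ≤ ((G.w v v' : ℝ) : EReal) + G.Val v' := by
  refine iSup_le fun σ => ?_
  obtain ⟨τ, hτ⟩ := exists_strategy_next_nil_eq σ he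
  have h := valMax_le_add_valMax_after hv σ τ
  simp only [step, ho, hτ, Bool.false_eq_true, if_false] at h
  exact h.trans (add_le_add_right (le_iSup (G.toGame.valMax _ v') _) _)

section ValueIteration

open scoped Classical

variable [Fintype V]

noncomputable def succs (v : V) : Finset V := Finset.univ.filter (G.E v)

theorem mem_succs {v v' : V} : v' ∈ G.succs v ↔ G.E v v' := by
  simp [succs]

theorem succs_nonempty (v : V) : (G.succs v).Nonempty :=
  (G.nonempty v).imp fun _ => G.mem_succs.mpr

noncomputable def bellman (f : V → WithTop ℤ) (v : V) : WithTop ℤ :=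
  if v = G.t then 0
  else if G.owner v then
    (G.succs v).sup' (G.succs_nonempty v) fun v' => (G.w v v' : WithTop ℤ) + f v'
  else
    (G.succs v).inf' (G.succs_nonempty v) fun v' => (G.w v v' : WithTop ℤ) + f v'

noncomputable def valIter (i : ℕ) : V → WithTop ℤ :=
  G.bellman^[i] fun v => if v = G.t then 0 else ⊤

theorem valIter_succ (i : ℕ) : G.valIter (i + 1) = G.bellman (G.valIter i) :=
  Function.iterate_succ_apply' _ _ _

@[simp] theorem bellman_target (f : V → WithTop ℤ) : G.bellman f G.t = 0 := if_pos rfl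

@[simp] theorem valIter_target (i : ℕ) : G.valIter i G.t = 0 := by
  cases i with
  | zero => exact if_pos rfl
  | succ i => rw [valIter_succ, bellman_target]

theorem bellman_of_owner {f : V → WithTop ℤ} {v : V} (hv : v ≠ G.t) (ho : G.owner v = true) :
    G.bellman f v =
      (G.succs v).sup' (G.succs_nonempty v) fun v' => (G.w v v' : WithTop ℤ) + f v' := by
  simp [bellman, hv, ho]

theorem bellman_of_not_owner {f : V → WithTop ℤ} {v : V} (hv : v ≠ G.t)
    (ho : G.owner v = false) :
    G.bellman f v =
      (G.succs v).inf' (G.succs_nonempty v) fun v' => (G.w v v' : WithTop ℤ) + f v' := by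
  simp [bellman, hv, ho]

theorem bellman_mono : Monotone G.bellman := by
  intro f f' hf v
  unfold bellman
  split_ifs
  · exact le_rfl
  · exact Finset.sup'_mono_fun fun v' _ => add_le_add_right (hf v') _
  · exact Finset.inf'_mono_fun fun v' _ => add_le_add_right (hf v') _

theorem valIter_antitone : Antitone G.valIter :=
  G.bellman_mono.antitone_iterate_of_map_le fun v => by
    by_cases hv : v = G.t
    · subst hv; simp
    · simp [hv]

theorem Val_le_bellman {f : V → WithTop ℤ} (hf : ∀ v, G.Val v ≤ (f v).toEReal) (v : V) :
    G.Val v ≤ (G.bellman f v).toEReal := by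
  by_cases hv : v = G.t
  · subst hv; simpa using G.Val_target_le_zero
  cases ho : G.owner v
  · obtain ⟨b, hb, heq⟩ := Finset.exists_mem_eq_inf' (G.succs_nonempty v)
      fun v' => (G.w v v' : WithTop ℤ) + f v'
    rw [G.bellman_of_not_owner hv ho, heq, WithTop.toEReal_coe_add]
    exact (G.Val_le_add_Val_of_edge hv ho (G.mem_succs.mp hb)).trans (add_le_add_right (hf b) _)
  · refine iSup_le fun σ => (G.valMax_le_add_Val_of_owner hv ho σ).trans ?_
    rw [G.bellman_of_owner hv ho]
    refine (add_le_add_right (hf _) _).trans ?_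
    rw [← WithTop.toEReal_coe_add, WithTop.toEReal_le_toEReal]
    exact Finset.le_sup' (fun v' => (G.w v v' : WithTop ℤ) + f v')
      (G.mem_succs.mpr (σ.valid _ _))

theorem Val_le_valIter (i : ℕ) (v : V) : G.Val v ≤ (G.valIter i v).toEReal := by
  induction i generalizing v with
  | zero =>
    by_cases hv : v = G.t
    · subst hv; simpa using G.Val_target_le_zero
    · simp [valIter, hv]
  | succ i ih => rw [valIter_succ]; exact G.Val_le_bellman ih v

theorem exists_isFixedPt_valIter (hfin : ∀ v : V, ∃ m : ℤ, G.Val v = ((m : ℝ) : EReal)) :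
    ∃ K, Function.IsFixedPt G.bellman (G.valIter K) := by
  have hstable : ∀ v, ∃ N, ∀ i, N ≤ i → G.valIter i v = G.valIter N v := fun v => by
    obtain ⟨m, hm⟩ := hfin v
    refine WithTop.exists_forall_ge_eq_of_antitone (fun i j hij => G.valIter_antitone hij v) m
      fun i => ?_
    rw [← WithTop.toEReal_le_toEReal, WithTop.toEReal_coe, ← hm]
    exact G.Val_le_valIter i v
  choose N hN using hstable
  refine ⟨Finset.univ.sup N, funext fun v => ?_⟩
  have hv : N v ≤ Finset.univ.sup N := Finset.le_sup (Finset.mem_univ v)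
  rw [← valIter_succ, hN v _ (hv.trans (Nat.le_succ _)), hN v _ hv]

noncomputable def argmaxSucc (f : V → WithTop ℤ) (v : V) : V :=
  (Finset.exists_mem_eq_sup' (G.succs_nonempty v) fun v' => (G.w v v' : WithTop ℤ) + f v').choose

theorem argmaxSucc_edge (f : V → WithTop ℤ) (v : V) : G.E v (G.argmaxSucc f v) :=
  G.mem_succs.mp (Finset.exists_mem_eq_sup' _ _).choose_spec.1

theorem sup'_eq_argmaxSucc (f : V → WithTop ℤ) (v : V) :
    ((G.succs v).sup' (G.succs_nonempty v) fun v' => (G.w v v' : WithTop ℤ) + f v') =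
      (G.w v (G.argmaxSucc f v) : WithTop ℤ) + f (G.argmaxSucc f v) :=
  (Finset.exists_mem_eq_sup' _ _).choose_spec.2

noncomputable def argminSucc (f : V → WithTop ℤ) (v : V) : V :=
  (Finset.exists_mem_eq_inf' (G.succs_nonempty v) fun v' => (G.w v v' : WithTop ℤ) + f v').choose

theorem argminSucc_edge (f : V → WithTop ℤ) (v : V) : G.E v (G.argminSucc f v) :=
  G.mem_succs.mp (Finset.exists_mem_eq_inf' _ _).choose_spec.1

theorem inf'_eq_argminSucc (f : V → WithTop ℤ) (v : V) :
    ((G.succs v).inf' (G.succs_nonempty v) fun v' => (G.w v v' : WithTop ℤ) + f v') =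
      (G.w v (G.argminSucc f v) : WithTop ℤ) + f (G.argminSucc f v) :=
  (Finset.exists_mem_eq_inf' _ _).choose_spec.2

noncomputable def maxStrategy (f : V → WithTop ℤ) : G.toGame.Strategy :=
  ⟨fun _ v => G.argmaxSucc f v, fun _ v => G.argmaxSucc_edge f v⟩

theorem bellman_le_step_maxStrategy (f : V → WithTop ℤ) {v : V} (hv : v ≠ G.t)
    (τ : G.toGame.Strategy) (h : List V) :
    G.bellman f v ≤ (G.w v (G.step (G.maxStrategy f) τ h v) : WithTop ℤ) +
      f (G.step (G.maxStrategy f) τ h v) := by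
  cases ho : G.owner v
  · rw [G.bellman_of_not_owner hv ho]
    exact Finset.inf'_le (fun v' => (G.w v v' : WithTop ℤ) + f v')
      (G.mem_succs.mpr (G.toGame.step_edge ..))
  · rw [G.bellman_of_owner hv ho, G.sup'_eq_argmaxSucc]
    simp [step, ho, maxStrategy]

theorem maxStrategy_after (f : V → WithTop ℤ) (u : V) :
    (G.maxStrategy f).after u = G.maxStrategy f := rfl

theorem le_MCR_play_maxStrategy {f : V → WithTop ℤ} (hf : Function.IsFixedPt G.bellman f)
    (n : ℕ) (v : V) (τ : G.toGame.Strategy) (hn : G.toGame.play (G.maxStrategy f) τ v n = G.t) :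
    (f v).toEReal ≤ G.toGame.MCR G.t (G.toGame.play (G.maxStrategy f) τ v) := by
  have htarget : ∀ τ,
      (f G.t).toEReal ≤ G.toGame.MCR G.t (G.toGame.play (G.maxStrategy f) τ G.t) := fun τ => by
    rw [← hf, MCR_play_self, bellman_target, WithTop.toEReal_zero]
  induction n generalizing v τ with
  | zero => subst hn; exact htarget τ
  | succ n ih =>
    by_cases hv : v = G.t
    · subst hv; exact htarget τ
    rw [play_succ, maxStrategy_after] at hn
    have hstep := G.bellman_le_step_maxStrategy f hv τ []
    rw [hf.eq] at hstep
    rw [MCR_play_of_ne hv, maxStrategy_after]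
    refine (WithTop.toEReal_le_toEReal.mpr hstep).trans ?_
    rw [WithTop.toEReal_coe_add]
    exact add_le_add_right (ih _ _ hn) _

theorem le_Val_of_isFixedPt {f : V → WithTop ℤ} (hf : Function.IsFixedPt G.bellman f) (v : V) :
    (f v).toEReal ≤ G.Val v := by
  refine le_iSup_of_le (G.maxStrategy f) (le_iInf fun τ => ?_)
  by_cases hreach : ∃ n, G.toGame.play (G.maxStrategy f) τ v n = G.t
  · obtain ⟨n, hn⟩ := hreach
    exact G.le_MCR_play_maxStrategy hf n v τ hn
  · rw [MCR, dif_neg hreach]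
    exact le_top

noncomputable def minStrategy (K : ℕ) : G.toGame.Strategy :=
  ⟨fun h v => G.argminSucc (G.valIter (K - h.length - 1)) v, fun _ v => G.argminSucc_edge _ v⟩

theorem minStrategy_after (j : ℕ) (u : V) :
    (G.minStrategy (j + 1)).after u = G.minStrategy j :=
  Strategy.ext <| funext fun h => funext fun x => by
    simp only [minStrategy, Strategy.after, List.length_append, List.length_singleton]
    congr 2
    omega

theorem add_step_minStrategy_le_valIter (j : ℕ) {v : V} (hv : v ≠ G.t)
    (σ : G.toGame.Strategy) :
    (G.w v (G.step σ (G.minStrategy (j + 1)) [] v) : WithTop ℤ) +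
      G.valIter j (G.step σ (G.minStrategy (j + 1)) [] v) ≤ G.valIter (j + 1) v := by
  rw [valIter_succ]
  cases ho : G.owner v
  · rw [G.bellman_of_not_owner hv ho, G.inf'_eq_argminSucc]
    simp [step, ho, minStrategy]
  · rw [G.bellman_of_owner hv ho]
    exact Finset.le_sup' (fun v' => (G.w v v' : WithTop ℤ) + G.valIter j v')
      (G.mem_succs.mpr (G.toGame.step_edge ..))

theorem MCR_play_minStrategy_le (j : ℕ) (σ : G.toGame.Strategy) (v : V) :
    G.toGame.MCR G.t (G.toGame.play σ (G.minStrategy j) v) ≤ (G.valIter j v).toEReal := by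
  induction j generalizing σ v with
  | zero =>
    by_cases hv : v = G.t
    · subst hv; simp [MCR_play_self]
    · simp [valIter, hv]
  | succ j ih =>
    by_cases hv : v = G.t
    · subst hv; simp [MCR_play_self]
    rw [MCR_play_of_ne hv, minStrategy_after]
    refine (add_le_add_right (ih _ _) _).trans ?_
    rw [← WithTop.toEReal_coe_add, WithTop.toEReal_le_toEReal]
    exact G.add_step_minStrategy_le_valIter j hv σ

theorem valMin_minStrategy_le (K : ℕ) (v : V) :
    G.toGame.valMin (G.toGame.MCR G.t) v (G.minStrategy K) ≤ (G.valIter K v).toEReal :=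
  iSup_le fun σ => G.MCR_play_minStrategy_le K σ v

theorem minStrategy_finiteMemory (K : ℕ) : (G.minStrategy K).FiniteMemory := by
  let up : Fin (K + 1) → V → Fin (K + 1) := fun m _ => ⟨min (m + 1) K, by omega⟩
  have hfold : ∀ (l : List V) (m : Fin (K + 1)), (l.foldl up m).val = min (m + l.length) K := by
    intro l
    induction l with
    | nil => intro m; simp only [List.foldl_nil, List.length_nil]; omega
    | cons x l ih => intro m; simp only [List.foldl_cons, ih, up, List.length_cons]; omega
  refine ⟨Fin (K + 1), inferInstance, 0, up,
    fun m v => G.argminSucc (G.valIter (K - m - 1)) v, fun h v => ?_⟩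
  simp only [minStrategy, hfold, Fin.val_zero, zero_add, List.length_drop, List.length_append,
    List.length_reverse, List.length_singleton]
  congr 2
  omega

end ValueIteration

end MCRGame

/-- in every MCR game all of whose vertices have finite value, Min has a
finite-memory optimal strategy. -/
theorem statement_13 {V : Type} [Fintype V] (G : MCRGame V)
    (hfin : ∀ v : V, ∃ m : ℤ, G.Val v = ((m : ℝ) : EReal)) :
    ∃ τ : G.toGame.Strategy, τ.FiniteMemory ∧
      ∀ v : V, G.toGame.valMin (G.toGame.MCR G.t) v τ = G.Val v := by
  obtain ⟨K, hK⟩ := G.exists_isFixedPt_valIter hfin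
  refine ⟨G.minStrategy K, G.minStrategy_finiteMemory K, fun v => le_antisymm ?_ ?_⟩
  · exact (G.valMin_minStrategy_le K v).trans (G.le_Val_of_isFixedPt hK v)
  · exact G.toGame.lowerVal_le_valMin _ v _
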